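/- Let q ≥ q' ≥ p ≥ 1, let A ∈ ℂ^{m×N}, and let Δ : ℂ^m → ℂ^N be such that (A,Δ) is (q,p)–n–instance-optimal with constant C_N. Then there exists a map Δ' : ℂ^m → ℂ^N such that (A,Δ') is (q',p)–n–instance-optimal with constant 6C_N + 2. -/

import Mathlib

open scoped BigOperators
open scoped Classical

/-- The `ℓ_p` norm of a finite complex vector. -/
noncomputable def lpNorm {ι : Type*} [Fintype ι] (p : ℝ) (v : ι → ℂ) : ℝ :=
  (∑ i, ‖v i‖ ^ p) ^ (1 / p)

/-- Number of nonzero entries of a vector. -/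
noncomputable def sparsity {ι : Type*} [Fintype ι] (v : ι → ℂ) : ℕ :=
  (Finset.univ.filter fun i => v i ≠ 0).card

/-- Best `n`-term approximation error of `v` in `ℓ_p`. -/
noncomputable def bestApprox {ι : Type*} [Fintype ι] (n : ℕ) (p : ℝ) (v : ι → ℂ) : ℝ :=
  sInf {t : ℝ | ∃ z : ι → ℂ, sparsity z ≤ n ∧ t = lpNorm p (v - z)}

/-- `A` satisfies the restricted isometry property of order `n` with constant `δ`. -/
def HasRIP {m : ℕ} {ι : Type*} [Fintype ι] (A : Matrix (Fin m) ι ℂ) (n : ℕ) (δ : ℝ) : Prop :=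
  ∀ v : ι → ℂ, sparsity v ≤ n →
    (1 - δ) * lpNorm 2 v ^ 2 ≤ lpNorm 2 (A.mulVec v) ^ 2 ∧
      lpNorm 2 (A.mulVec v) ^ 2 ≤ (1 + δ) * lpNorm 2 v ^ 2

/-- `A` satisfies the `ℓ₂`-robust null space property of order `n`
with constants `ρ` and `τ`. -/
def HasNSP {m : ℕ} {ι : Type*} [Fintype ι] (A : Matrix (Fin m) ι ℂ) (n : ℕ) (ρ τ : ℝ) : Prop :=
  ∀ (v : ι → ℂ) (S : Finset ι), S.card ≤ n →
    lpNorm 2 (fun i => if i ∈ S then v i else 0) ≤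
      ρ * (n : ℝ) ^ (-(1 : ℝ) / 2) * lpNorm 1 (fun i => if i ∈ S then 0 else v i) +
        τ * lpNorm 2 (A.mulVec v)

/-- `(A, Δ)` is `(q,p)`–`n`–instance-optimal with constant `C`. -/
def InstOpt {m N : ℕ} (A : Matrix (Fin m) (Fin N) ℂ) (Δ : (Fin m → ℂ) → Fin N → ℂ)
    (q p : ℝ) (n : ℕ) (C : ℝ) : Prop :=
  ∀ z : Fin N → ℂ,
    lpNorm q (z - Δ (A.mulVec z)) ≤ C * (n : ℝ) ^ (1 / q - 1 / p) * bestApprox n p z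

/-
Since `Δ` must recover `n`-sparse vectors exactly, `(q,p)`-instance optimality forces the null
space property `‖v‖_q ≤ C n^{1/q-1/p} ‖v_{Wᶜ}‖_p` for `v ∈ ker A` and `|W| ≤ 2n`. Removing from
`v_{Wᶜ}` its `n` largest entries leaves an `ℓ_{q'}` tail of at most `n^{1/q'-1/p} ‖v_{Wᶜ}‖_p`, and
Hölder's inequality on the at most `3n` remaining entries turns `ℓ_q` into `ℓ_{q'}` at the cost of
`3^{1/q'-1/q} n^{1/q'-1/q} ≤ 3 n^{1/q'-1/q}`, giving the `ℓ_{q'}` null space property with constant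
`3C + 1`. The decoder choosing in each fiber of `A` a vector `x` of least `σ_n(x)_p` then has
`z - x ∈ ker A` with `ℓ_p` tail at most `σ_n(z)_p + σ_n(x)_p ≤ 2 σ_n(z)_p` off the union of the
two optimal supports.
-/

open scoped Finset Matrix

section LpNorm

variable {ι : Type*} [Fintype ι]

lemma lpNorm_nonneg (p : ℝ) (v : ι → ℂ) : 0 ≤ lpNorm p v := by
  unfold lpNorm
  positivity

lemma lpNorm_eq_norm_toLp {p : ℝ} (hp : 0 < p) (v : ι → ℂ) :
    lpNorm p v = ‖WithLp.toLp (ENNReal.ofReal p) v‖ := by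
  rw [PiLp.norm_eq_sum (by rwa [ENNReal.toReal_ofReal hp.le]), ENNReal.toReal_ofReal hp.le]
  rfl

lemma lpNorm_add_le {p : ℝ} (hp : 1 ≤ p) (u v : ι → ℂ) :
    lpNorm p (u + v) ≤ lpNorm p u + lpNorm p v := by
  have : Fact (1 ≤ ENNReal.ofReal p) := ⟨ENNReal.one_le_ofReal.2 hp⟩
  simp only [lpNorm_eq_norm_toLp (by linarith : 0 < p), WithLp.toLp_add]
  exact norm_add_le _ _

lemma lpNorm_sub_le {p : ℝ} (hp : 1 ≤ p) (u v : ι → ℂ) :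
    lpNorm p (u - v) ≤ lpNorm p u + lpNorm p v := by
  have : Fact (1 ≤ ENNReal.ofReal p) := ⟨ENNReal.one_le_ofReal.2 hp⟩
  simp only [lpNorm_eq_norm_toLp (by linarith : 0 < p), WithLp.toLp_sub]
  exact norm_sub_le _ _

lemma lpNorm_eq_zero_iff {p : ℝ} (hp : 1 ≤ p) {v : ι → ℂ} : lpNorm p v = 0 ↔ v = 0 := by
  have : Fact (1 ≤ ENNReal.ofReal p) := ⟨ENNReal.one_le_ofReal.2 hp⟩
  rw [lpNorm_eq_norm_toLp (by linarith), norm_eq_zero, WithLp.toLp_eq_zero]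

lemma lpNorm_le_lpNorm_of_forall_norm_le {p : ℝ} (hp : 0 < p) {u v : ι → ℂ}
    (h : ∀ i, ‖u i‖ ≤ ‖v i‖) : lpNorm p u ≤ lpNorm p v := by
  unfold lpNorm
  gcongr with i
  exact h i

lemma lpNorm_indicator_mono {p : ℝ} (hp : 0 < p) {s t : Set ι} (hst : s ⊆ t) (v : ι → ℂ) :
    lpNorm p (s.indicator v) ≤ lpNorm p (t.indicator v) := by
  refine lpNorm_le_lpNorm_of_forall_norm_le hp fun i => ?_
  rw [← Set.inter_eq_left.2 hst, ← Set.indicator_indicator]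
  exact norm_indicator_le_norm_self _ _

lemma sum_norm_indicator_rpow {r : ℝ} (hr : r ≠ 0) (S : Finset ι) (v : ι → ℂ) :
    ∑ i, ‖(S : Set ι).indicator v i‖ ^ r = ∑ i ∈ S, ‖v i‖ ^ r := by
  rw [← Finset.sum_subset (Finset.subset_univ S) fun i _ hi => ?_]
  · refine Finset.sum_congr rfl fun i hi => ?_
    rw [Set.indicator_of_mem (Finset.mem_coe.2 hi)]
  · rw [Set.indicator_of_notMem (by simpa using hi), norm_zero, Real.zero_rpow hr]

lemma lpNorm_indicator_le_card_rpow_mul {q' q : ℝ} (hq' : 0 < q') (hq'q : q' ≤ q)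
    (S : Finset ι) (v : ι → ℂ) :
    lpNorm q' ((S : Set ι).indicator v) ≤
      (#S : ℝ) ^ (1 / q' - 1 / q) * lpNorm q ((S : Set ι).indicator v) := by
  have hq : 0 < q := hq'.trans_le hq'q
  have key := Real.rpow_sum_le_const_mul_sum_rpow_of_nonneg S (f := fun i => ‖v i‖ ^ q')
    ((one_le_div hq').2 hq'q) fun i _ => by positivity
  simp only [← Real.rpow_mul (norm_nonneg _), mul_div_cancel₀ _ hq'.ne'] at key
  have hsum : 0 ≤ ∑ i ∈ S, ‖v i‖ ^ q' := by positivity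
  calc lpNorm q' ((S : Set ι).indicator v)
      = ((∑ i ∈ S, ‖v i‖ ^ q') ^ (q / q')) ^ (1 / q) := by
        rw [lpNorm, sum_norm_indicator_rpow hq'.ne', ← Real.rpow_mul hsum]
        congr 1
        field_simp
    _ ≤ ((#S : ℝ) ^ (q / q' - 1) * ∑ i ∈ S, ‖v i‖ ^ q) ^ (1 / q) := by gcongr
    _ = (#S : ℝ) ^ (1 / q' - 1 / q) * lpNorm q ((S : Set ι).indicator v) := by
        rw [Real.mul_rpow (by positivity) (by positivity), ← Real.rpow_mul (by positivity),
          lpNorm, sum_norm_indicator_rpow hq.ne']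
        congr 2
        field_simp

lemma lpNorm_indicator_le_mul_rpow_mul {q' q c : ℝ} (hq' : 1 ≤ q') (hq'q : q' ≤ q) (hc : 1 ≤ c)
    {n : ℕ} {S : Finset ι} (hS : (#S : ℝ) ≤ c * n) (v : ι → ℂ) :
    lpNorm q' ((S : Set ι).indicator v) ≤ c * (n : ℝ) ^ (1 / q' - 1 / q) * lpNorm q v := by
  have hq : 0 < q := by linarith
  have he : 0 ≤ 1 / q' - 1 / q := sub_nonneg.2 (one_div_le_one_div_of_le (by linarith) hq'q)
  have he1 : 1 / q' - 1 / q ≤ 1 := by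
    linarith [(div_le_one (by linarith)).2 hq', one_div_pos.2 hq]
  calc lpNorm q' ((S : Set ι).indicator v)
      ≤ (#S : ℝ) ^ (1 / q' - 1 / q) * lpNorm q ((S : Set ι).indicator v) :=
        lpNorm_indicator_le_card_rpow_mul (by linarith) hq'q S v
    _ ≤ (c * n) ^ (1 / q' - 1 / q) * lpNorm q v := by
        gcongr
        · exact lpNorm_nonneg _ _
        · exact lpNorm_le_lpNorm_of_forall_norm_le hq fun i => norm_indicator_le_norm_self _ _
    _ ≤ c * (n : ℝ) ^ (1 / q' - 1 / q) * lpNorm q v := by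
        rw [Real.mul_rpow (by linarith) (Nat.cast_nonneg n)]
        gcongr
        · exact lpNorm_nonneg _ _
        · exact Real.rpow_le_self_of_one_le hc he1

end LpNorm

section Stechkin

variable {ι : Type*} [Fintype ι]

lemma exists_card_le_forall_notMem_mul_le (a : ι → ℝ) (ha : ∀ i, 0 ≤ a i) (n : ℕ) :
    ∃ S : Finset ι, #S ≤ n ∧ ∀ i ∉ S, n * a i ≤ ∑ j, a j := by
  set T := Finset.univ.filter fun i => ∑ j, a j < n * a i
  refine ⟨T, ?_, fun i hi => by simpa [T] using hi⟩
  rcases T.eq_empty_or_nonempty with hT | ⟨i₀, hi₀⟩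
  · simp [hT]
  have hsum_pos : 0 < ∑ j, a j := by
    have hle : a i₀ ≤ ∑ j, a j := Finset.single_le_sum (fun j _ => ha j) (Finset.mem_univ _)
    have hlt : ∑ j, a j < n * a i₀ := (Finset.mem_filter.1 hi₀).2
    nlinarith [ha i₀]
  have hcard : (#T : ℝ) * ∑ j, a j ≤ n * ∑ j, a j :=
    calc (#T : ℝ) * ∑ j, a j ≤ ∑ i ∈ T, n * a i := by
          simpa using T.card_nsmul_le_sum _ _ fun i hi => (Finset.mem_filter.1 hi).2.le
      _ ≤ n * ∑ j, a j := by
          rw [← Finset.mul_sum]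
          exact mul_le_mul_of_nonneg_left
            (Finset.sum_le_sum_of_subset_of_nonneg (Finset.subset_univ T) fun j _ _ => ha j)
            (Nat.cast_nonneg n)
  exact_mod_cast le_of_mul_le_mul_right hcard hsum_pos

lemma exists_card_le_lpNorm_indicator_compl_le {p q : ℝ} (hp : 0 < p) (hpq : p ≤ q) {n : ℕ}
    (hn : 0 < n) (v : ι → ℂ) :
    ∃ S : Finset ι, #S ≤ n ∧
      lpNorm q ((S : Set ι)ᶜ.indicator v) ≤ (n : ℝ) ^ (1 / q - 1 / p) * lpNorm p v := by
  have hq : 0 < q := hp.trans_le hpq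
  have hn' : (0 : ℝ) < n := by exact_mod_cast hn
  set M := ∑ j, ‖v j‖ ^ p with hM
  have hM0 : 0 ≤ M := by positivity
  have hr : 0 ≤ q / p - 1 := by rw [sub_nonneg, one_le_div hp]; exact hpq
  obtain ⟨S, hS, hlarge⟩ := exists_card_le_forall_notMem_mul_le (fun i => ‖v i‖ ^ p)
    (fun i => by positivity) n
  -- Outside `S` every entry is at most `(M / n) ^ (1 / p)`, so raising from `p` to `q` costs
  -- at most the factor `(M / n) ^ ((q - p) / p)`.
  have hentry : ∀ i, ‖(S : Set ι)ᶜ.indicator v i‖ ^ q ≤ (M / n) ^ (q / p - 1) * ‖v i‖ ^ p := by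
    intro i
    by_cases hi : i ∈ S
    · rw [Set.indicator_of_notMem (by simpa using hi), norm_zero, Real.zero_rpow hq.ne']
      positivity
    · rw [Set.indicator_of_mem (by simpa using hi)]
      have hsmall : ‖v i‖ ^ p ≤ M / n := by
        rw [le_div_iff₀ hn', mul_comm]
        exact hlarge i hi
      calc ‖v i‖ ^ q = (‖v i‖ ^ p) ^ (q / p - 1) * ‖v i‖ ^ p := by
            rw [← Real.rpow_mul (norm_nonneg _), ← Real.rpow_add_of_nonneg (norm_nonneg _)
              (mul_nonneg hp.le hr) hp.le]
            congr 1
            field_simp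
            ring
        _ ≤ (M / n) ^ (q / p - 1) * ‖v i‖ ^ p := by gcongr
  refine ⟨S, hS, ?_⟩
  calc lpNorm q ((S : Set ι)ᶜ.indicator v)
      ≤ ((M / n) ^ (q / p - 1) * M) ^ (1 / q) := by
        rw [lpNorm, hM, Finset.mul_sum]
        gcongr with i
        exact hentry i
    _ = (n : ℝ) ^ (1 / q - 1 / p) * lpNorm p v := by
        rw [Real.div_rpow hM0 hn'.le, div_mul_eq_mul_div, ← Real.rpow_add_one' hM0 (by positivity),
          Real.div_rpow (by positivity) (Real.rpow_nonneg hn'.le _), ← Real.rpow_mul hM0,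
          ← Real.rpow_mul hn'.le, lpNorm, ← hM, div_eq_mul_inv, ← Real.rpow_neg hn'.le, mul_comm]
        congr 2 <;> field_simp <;> ring

end Stechkin

section BestApprox

variable {ι : Type*} [Fintype ι]

lemma sparsity_indicator_le (S : Finset ι) (v : ι → ℂ) :
    sparsity ((S : Set ι).indicator v) ≤ #S := by
  refine Finset.card_le_card fun i hi => ?_
  by_contra hiS
  exact (Finset.mem_filter.1 hi).2 (Set.indicator_of_notMem (by simpa using hiS) v)

lemma sparsity_neg (v : ι → ℂ) : sparsity (-v) = sparsity v := by
  simp [sparsity]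

lemma bestApprox_nonneg (n : ℕ) (p : ℝ) (v : ι → ℂ) : 0 ≤ bestApprox n p v :=
  Real.sInf_nonneg fun _ ⟨_, _, ht⟩ => ht ▸ lpNorm_nonneg _ _

lemma bestApprox_le_lpNorm_sub {n : ℕ} {p : ℝ} (v : ι → ℂ) {w : ι → ℂ} (hw : sparsity w ≤ n) :
    bestApprox n p v ≤ lpNorm p (v - w) :=
  csInf_le ⟨0, fun _ ⟨_, _, ht⟩ => ht ▸ lpNorm_nonneg _ _⟩ ⟨w, hw, rfl⟩

lemma bestApprox_le_lpNorm_indicator_compl {n : ℕ} {p : ℝ} {S : Finset ι} (hS : #S ≤ n)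
    (v : ι → ℂ) : bestApprox n p v ≤ lpNorm p ((S : Set ι)ᶜ.indicator v) := by
  rw [Set.indicator_compl]
  exact bestApprox_le_lpNorm_sub v ((sparsity_indicator_le S v).trans hS)

lemma bestApprox_eq_zero_of_sparsity_le {n : ℕ} {p : ℝ} (hp : 1 ≤ p) {v : ι → ℂ}
    (hv : sparsity v ≤ n) : bestApprox n p v = 0 := by
  refine le_antisymm ?_ (bestApprox_nonneg n p v)
  simpa [(lpNorm_eq_zero_iff hp).2 rfl] using bestApprox_le_lpNorm_sub (p := p) v hv

lemma exists_bestApprox_eq_lpNorm_indicator_compl {p : ℝ} (hp : 0 < p) (n : ℕ) (v : ι → ℂ) :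
    ∃ S : Finset ι, #S ≤ n ∧ bestApprox n p v = lpNorm p ((S : Set ι)ᶜ.indicator v) := by
  obtain ⟨S, hS, hSmin⟩ := Finset.exists_min_image (Finset.univ.filter fun S : Finset ι => #S ≤ n)
    (fun S => lpNorm p ((S : Set ι)ᶜ.indicator v)) ⟨∅, by simp⟩
  have hSn : #S ≤ n := (Finset.mem_filter.1 hS).2
  refine ⟨S, hSn, le_antisymm (bestApprox_le_lpNorm_indicator_compl hSn v) ?_⟩
  refine le_csInf ⟨_, 0, by simp [sparsity], rfl⟩ fun _ ⟨w, hw, ht⟩ => ht ▸ ?_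
  set T := Finset.univ.filter fun i => w i ≠ 0
  refine (hSmin T (Finset.mem_filter.2 ⟨Finset.mem_univ _, hw⟩)).trans
    (lpNorm_le_lpNorm_of_forall_norm_le hp fun i => ?_)
  by_cases hi : w i = 0 <;> simp [T, hi]

end BestApprox

section Decoder

variable {m : ℕ} {ι : Type*} [Fintype ι]

lemma exists_forall_lpNorm_indicator_le (A : Matrix (Fin m) ι ℂ) {p : ℝ} (hp : 1 ≤ p)
    (s : Set ι) (z₀ : ι → ℂ) :
    ∃ x, A *ᵥ x = A *ᵥ z₀ ∧
      ∀ z, A *ᵥ z = A *ᵥ z₀ → lpNorm p (s.indicator x) ≤ lpNorm p (s.indicator z) := by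
  have : Fact (1 ≤ ENNReal.ofReal p) := ⟨ENNReal.one_le_ofReal.2 hp⟩
  let L : (ι → ℂ) →ₗ[ℂ] PiLp (ENNReal.ofReal p) fun _ : ι => ℂ :=
    { toFun := fun v => WithLp.toLp _ (s.indicator v)
      map_add' := fun u v => by rw [Set.indicator_add', WithLp.toLp_add]
      map_smul' := fun c v => by
        rw [show s.indicator (c • v) = c • s.indicator v from Set.indicator_const_smul s c v,
          WithLp.toLp_smul]
        rfl }
  have hL : ∀ v, lpNorm p (s.indicator v) = ‖L v‖ :=
    fun v => lpNorm_eq_norm_toLp (by linarith) _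
  -- Minimise `‖L z₀ + u‖` over the finite-dimensional, hence closed, subspace `L (ker A)`.
  set U := (LinearMap.ker A.mulVecLin).map L
  obtain ⟨_, ⟨k, hk, rfl⟩, hmin⟩ :=
    U.closed_of_finiteDimensional.exists_infDist_eq_dist ⟨0, U.zero_mem⟩ (-L z₀)
  have hk : A *ᵥ k = 0 := hk
  refine ⟨z₀ + k, by rw [Matrix.mulVec_add, hk, add_zero], fun z hz => ?_⟩
  have hzk : z - z₀ ∈ LinearMap.ker A.mulVecLin := by
    simp [Matrix.mulVec_sub, hz]
  calc lpNorm p (s.indicator (z₀ + k)) = Metric.infDist (-L z₀) U := by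
        rw [hmin, hL, dist_eq_norm, map_add, ← norm_neg]
        congr 1
        abel
    _ ≤ dist (-L z₀) (L (z - z₀)) := Metric.infDist_le_dist_of_mem ⟨_, hzk, rfl⟩
    _ = lpNorm p (s.indicator z) := by
        rw [hL, dist_eq_norm, map_sub, ← norm_neg]
        congr 1
        abel

lemma exists_forall_bestApprox_le (A : Matrix (Fin m) ι ℂ) {p : ℝ} (hp : 1 ≤ p) (n : ℕ)
    (z₀ : ι → ℂ) :
    ∃ x, A *ᵥ x = A *ᵥ z₀ ∧ ∀ z, A *ᵥ z = A *ᵥ z₀ → bestApprox n p x ≤ bestApprox n p z := by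
  choose x hxA hxmin using fun S : Finset ι => exists_forall_lpNorm_indicator_le A hp (↑S)ᶜ z₀
  obtain ⟨S, hS, hSmin⟩ := Finset.exists_min_image (Finset.univ.filter fun S : Finset ι => #S ≤ n)
    (fun S => lpNorm p ((S : Set ι)ᶜ.indicator (x S))) ⟨∅, by simp⟩
  refine ⟨x S, hxA S, fun z hz => ?_⟩
  obtain ⟨T, hT, hTz⟩ := exists_bestApprox_eq_lpNorm_indicator_compl (by linarith) n z
  calc bestApprox n p (x S) ≤ lpNorm p ((S : Set ι)ᶜ.indicator (x S)) :=
        bestApprox_le_lpNorm_indicator_compl (Finset.mem_filter.1 hS).2 _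
    _ ≤ lpNorm p ((T : Set ι)ᶜ.indicator (x T)) :=
        hSmin T (Finset.mem_filter.2 ⟨Finset.mem_univ _, hT⟩)
    _ ≤ lpNorm p ((T : Set ι)ᶜ.indicator z) := hxmin T z hz
    _ = bestApprox n p z := hTz.symm

noncomputable def minBestApproxDecoder (A : Matrix (Fin m) ι ℂ) (n : ℕ) (p : ℝ)
    (y : Fin m → ℂ) : ι → ℂ :=
  Classical.epsilon fun x => A *ᵥ x = y ∧ ∀ z, A *ᵥ z = y → bestApprox n p x ≤ bestApprox n p z

lemma minBestApproxDecoder_spec (A : Matrix (Fin m) ι ℂ) {p : ℝ} (hp : 1 ≤ p) (n : ℕ)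
    (z : ι → ℂ) :
    A *ᵥ minBestApproxDecoder A n p (A *ᵥ z) = A *ᵥ z ∧
      bestApprox n p (minBestApproxDecoder A n p (A *ᵥ z)) ≤ bestApprox n p z := by
  obtain ⟨hx, hmin⟩ := Classical.epsilon_spec (exists_forall_bestApprox_le A hp n z)
  exact ⟨hx, hmin z rfl⟩

end Decoder

namespace InstOpt

variable {m N : ℕ} {A : Matrix (Fin m) (Fin N) ℂ} {Δ : (Fin m → ℂ) → Fin N → ℂ}
  {q p : ℝ} {n : ℕ} {C : ℝ}

lemma apply_mulVec_of_sparsity_le (h : InstOpt A Δ q p n C) (hp : 1 ≤ p) (hq : 1 ≤ q)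
    {z : Fin N → ℂ} (hz : sparsity z ≤ n) : Δ (A *ᵥ z) = z := by
  have herr := h z
  rw [bestApprox_eq_zero_of_sparsity_le hp hz, mul_zero] at herr
  exact (sub_eq_zero.1 ((lpNorm_eq_zero_iff hq).1
    (le_antisymm herr (lpNorm_nonneg _ _)))).symm

lemma lpNorm_le_of_mulVec_eq_zero (h : InstOpt A Δ q p n C) (hp : 1 ≤ p) (hq : 1 ≤ q)
    (hC : 0 ≤ C) {v : Fin N → ℂ} (hv : A *ᵥ v = 0) {S T : Finset (Fin N)} (hS : #S ≤ n)
    (hT : #T ≤ n) :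
    lpNorm q v ≤
      C * (n : ℝ) ^ (1 / q - 1 / p) * lpNorm p ((↑(S ∪ T) : Set (Fin N))ᶜ.indicator v) := by
  set u := (S : Set (Fin N)).indicator v
  set w := (S : Set (Fin N))ᶜ.indicator v
  -- `w` and the `n`-sparse vector `-u` have the same measurements, so `Δ` decodes `w` as `-u`.
  have hdecode : Δ (A *ᵥ w) = -u := by
    have hw : w = v - u := Set.indicator_compl _ _
    rw [hw, Matrix.mulVec_sub, hv, zero_sub, ← Matrix.mulVec_neg]
    exact h.apply_mulVec_of_sparsity_le hp hq
      ((sparsity_neg u).le.trans ((sparsity_indicator_le S v).trans hS))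
  have hwu : w - -u = v := by
    rw [sub_neg_eq_add, add_comm]
    exact Set.indicator_self_add_compl _ _
  have htail : (T : Set (Fin N))ᶜ.indicator w = (↑(S ∪ T) : Set (Fin N))ᶜ.indicator v := by
    rw [Set.indicator_indicator, Finset.coe_union, Set.compl_union, Set.inter_comm]
  calc lpNorm q v = lpNorm q (w - Δ (A *ᵥ w)) := by rw [hdecode, hwu]
    _ ≤ C * (n : ℝ) ^ (1 / q - 1 / p) * bestApprox n p w := h w
    _ ≤ C * (n : ℝ) ^ (1 / q - 1 / p) * lpNorm p ((↑(S ∪ T) : Set (Fin N))ᶜ.indicator v) := by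
        rw [← htail]
        gcongr
        exact bestApprox_le_lpNorm_indicator_compl hT w

lemma lpNorm_le_of_mulVec_eq_zero_of_le {q' : ℝ} (h : InstOpt A Δ q p n C) (hp : 1 ≤ p)
    (hpq' : p ≤ q') (hq'q : q' ≤ q) (hn : 0 < n) (hC : 0 ≤ C) {v : Fin N → ℂ}
    (hv : A *ᵥ v = 0) {S T : Finset (Fin N)} (hS : #S ≤ n) (hT : #T ≤ n) :
    lpNorm q' v ≤
      (3 * C + 1) * (n : ℝ) ^ (1 / q' - 1 / p) *
        lpNorm p ((↑(S ∪ T) : Set (Fin N))ᶜ.indicator v) := by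
  have hq' : 1 ≤ q' := hp.trans hpq'
  have hn' : (0 : ℝ) < n := by exact_mod_cast hn
  set W := S ∪ T
  set B := lpNorm p ((W : Set (Fin N))ᶜ.indicator v)
  obtain ⟨R, hR, hRtail⟩ :=
    exists_card_le_lpNorm_indicator_compl_le (by linarith) hpq' hn ((W : Set (Fin N))ᶜ.indicator v)
  set G := W ∪ R
  have hGc : (R : Set (Fin N))ᶜ.indicator ((W : Set (Fin N))ᶜ.indicator v) =
      (G : Set (Fin N))ᶜ.indicator v := by
    rw [Set.indicator_indicator, Set.inter_comm, ← Set.compl_union, ← Finset.coe_union]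
  have hG : (#G : ℝ) ≤ 3 * n := by
    have hWR := Finset.card_union_le (S ∪ T) R
    have hST := Finset.card_union_le S T
    exact_mod_cast (show #(S ∪ T ∪ R) ≤ 3 * n by omega)
  have hhead : lpNorm q' ((G : Set (Fin N)).indicator v) ≤
      3 * C * (n : ℝ) ^ (1 / q' - 1 / p) * B :=
    calc lpNorm q' ((G : Set (Fin N)).indicator v)
        ≤ 3 * (n : ℝ) ^ (1 / q' - 1 / q) * lpNorm q v :=
          lpNorm_indicator_le_mul_rpow_mul hq' hq'q (by norm_num) hG v
      _ ≤ 3 * (n : ℝ) ^ (1 / q' - 1 / q) * (C * (n : ℝ) ^ (1 / q - 1 / p) * B) := by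
          gcongr
          exact h.lpNorm_le_of_mulVec_eq_zero hp (hq'.trans hq'q) hC hv hS hT
      _ = 3 * C * (n : ℝ) ^ (1 / q' - 1 / p) * B := by
          rw [show 1 / q' - 1 / p = (1 / q' - 1 / q) + (1 / q - 1 / p) by ring,
            Real.rpow_add hn']
          ring
  calc lpNorm q' v
      = lpNorm q' ((G : Set (Fin N)).indicator v + (G : Set (Fin N))ᶜ.indicator v) := by
        rw [Set.indicator_self_add_compl]
    _ ≤ 3 * C * (n : ℝ) ^ (1 / q' - 1 / p) * B + (n : ℝ) ^ (1 / q' - 1 / p) * B := by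
        refine (lpNorm_add_le hq' _ _).trans (add_le_add hhead ?_)
        rw [← hGc]
        exact hRtail
    _ = (3 * C + 1) * (n : ℝ) ^ (1 / q' - 1 / p) * B := by ring

theorem instOpt_minBestApproxDecoder {q' : ℝ} (h : InstOpt A Δ q p n C) (hp : 1 ≤ p) (hpq' : p ≤ q')
    (hq'q : q' ≤ q) (hn : 0 < n) (hC : 0 ≤ C) :
    InstOpt A (minBestApproxDecoder A n p) q' p n (6 * C + 2) := by
  have hp0 : 0 < p := by linarith
  intro z
  obtain ⟨hx, hσx⟩ := minBestApproxDecoder_spec A hp n z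
  set x := minBestApproxDecoder A n p (A *ᵥ z)
  obtain ⟨S, hS, hσz⟩ := exists_bestApprox_eq_lpNorm_indicator_compl hp0 n z
  obtain ⟨T, hT, hσx'⟩ := exists_bestApprox_eq_lpNorm_indicator_compl hp0 n x
  have hker : A *ᵥ (z - x) = 0 := by rw [Matrix.mulVec_sub, hx, sub_self]
  have htail : lpNorm p ((↑(S ∪ T) : Set (Fin N))ᶜ.indicator (z - x)) ≤ 2 * bestApprox n p z :=
    calc lpNorm p ((↑(S ∪ T) : Set (Fin N))ᶜ.indicator (z - x))
        ≤ lpNorm p ((↑(S ∪ T) : Set (Fin N))ᶜ.indicator z) +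
            lpNorm p ((↑(S ∪ T) : Set (Fin N))ᶜ.indicator x) := by
          rw [Set.indicator_sub']
          exact lpNorm_sub_le hp _ _
      _ ≤ bestApprox n p z + bestApprox n p x := by
          rw [hσz, hσx']
          gcongr <;> apply lpNorm_indicator_mono hp0 <;> simp
      _ ≤ 2 * bestApprox n p z := by linarith
  calc lpNorm q' (z - x)
      ≤ (3 * C + 1) * (n : ℝ) ^ (1 / q' - 1 / p) *
          lpNorm p ((↑(S ∪ T) : Set (Fin N))ᶜ.indicator (z - x)) :=
        h.lpNorm_le_of_mulVec_eq_zero_of_le hp hpq' hq'q hn hC hker hS hT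
    _ ≤ (3 * C + 1) * (n : ℝ) ^ (1 / q' - 1 / p) * (2 * bestApprox n p z) := by gcongr
    _ = (6 * C + 2) * (n : ℝ) ^ (1 / q' - 1 / p) * bestApprox n p z := by ring

/-- A negative constant forces both sides of the defining inequality to vanish. -/
lemma of_neg {q' : ℝ} (h : InstOpt A Δ q p n C) (hq : 1 ≤ q) (hq' : 1 ≤ q') (hn : 0 < n)
    (hC : C < 0) (C' : ℝ) : InstOpt A Δ q' p n C' := by
  intro z
  have hσ : bestApprox n p z = 0 := by
    refine le_antisymm ?_ (bestApprox_nonneg n p z)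
    have hneg : C * (n : ℝ) ^ (1 / q - 1 / p) < 0 :=
      mul_neg_of_neg_of_pos hC (Real.rpow_pos_of_pos (by exact_mod_cast hn) _)
    nlinarith [h z, lpNorm_nonneg q (z - Δ (A *ᵥ z))]
  have hexact : z - Δ (A *ᵥ z) = 0 := by
    rw [← lpNorm_eq_zero_iff hq]
    exact le_antisymm (by simpa [hσ] using h z) (lpNorm_nonneg _ _)
  rw [hexact, (lpNorm_eq_zero_iff hq').2 rfl, hσ, mul_zero]

end InstOpt

/-- **Instance optimality can be transferred to smaller exponents**
(Foucart–Rauhut, Thm. 11.8).  If `(A,Δ)` is `(q,p)`–`n`–instance-optimal with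
constant `C_N` and `q ≥ q' ≥ p ≥ 1`, then there exists `Δ'` such that `(A,Δ')` is
`(q',p)`–`n`–instance-optimal with constant `6 C_N + 2`. -/
theorem stmt9 {m N : ℕ} (p q' q : ℝ) (hp : 1 ≤ p) (hpq' : p ≤ q') (hq'q : q' ≤ q)
    (n : ℕ) (hn : 0 < n) (A : Matrix (Fin m) (Fin N) ℂ) (CN : ℝ)
    (Δ : (Fin m → ℂ) → Fin N → ℂ) (h : InstOpt A Δ q p n CN) :
    ∃ Δ' : (Fin m → ℂ) → Fin N → ℂ, InstOpt A Δ' q' p n (6 * CN + 2) := by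
  rcases lt_or_ge CN 0 with hC | hC
  · exact ⟨Δ, h.of_neg (by linarith) (by linarith) hn hC _⟩
  · exact ⟨minBestApproxDecoder A n p, h.instOpt_minBestApproxDecoder hp hpq' hq'q hn hC⟩
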